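/- Let p be a prime, s ∈ ℤ_{≥1}, a ∈ ℤ_p ∖ ℤ_{≤0}. Denote by B°_k the coefficients B_k taken with c = 1 (so B°_k = (k+a)^{−1}(A_k − (−1)^{se} A^{(1)}_{(k−l)/p})). If the function k ↦ B°_k/A_k on ℤ_{≥0} is Lipschitz, then for every c ∈ 1+qW the function k ↦ B_k/A_k is Lipschitz. -/

import Mathlib

open scoped Classical

namespace HGP

/-- `𝔽̄_p`, an algebraic closure of the prime field `𝔽_p`. -/
abbrev Fbar (p : ℕ) [Fact p.Prime] : Type _ := AlgebraicClosure (ZMod p)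

/-- `W = W(𝔽̄_p)`, the ring of Witt vectors of `𝔽̄_p`. -/
abbrev Wp (p : ℕ) [Fact p.Prime] : Type _ := WittVector p (Fbar p)

/-- `K = Frac W`. -/
abbrev Kp (p : ℕ) [Fact p.Prime] : Type _ := FractionRing (Wp p)

/-- The canonical embedding `ℤ_p = W(𝔽_p) → W(𝔽̄_p)`. -/
noncomputable def iota (p : ℕ) [Fact p.Prime] : ℤ_[p] →+* Wp p :=
  (WittVector.map (algebraMap (ZMod p) (Fbar p))).comp (WittVector.equiv p).symm.toRingHom

/-- The canonical embedding `W → K`. -/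
noncomputable def iotaK (p : ℕ) [Fact p.Prime] : Wp p →+* Kp p := algebraMap (Wp p) (Kp p)

/-- `l`: the unique integer in `{0,…,p−1}` with `a + l ≡ 0 mod p`. -/
noncomputable def dl (p : ℕ) [Fact p.Prime] (a : ℤ_[p]) : ℕ := (-a).appr 1

/-- `q := 4` if `p = 2` and `q := p` otherwise. -/
def qq (p : ℕ) : ℕ := if p = 2 then 4 else p

/-- `l′`: the unique integer in `{0,…,q−1}` with `a + l′ ≡ 0 mod q`. -/
noncomputable def dl' (p : ℕ) [Fact p.Prime] (a : ℤ_[p]) : ℕ :=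
  (-a).appr (if p = 2 then 2 else 1)

/-- `e := l′ − ⌊l′/p⌋`. -/
noncomputable def de (p : ℕ) [Fact p.Prime] (a : ℤ_[p]) : ℕ := dl' p a - dl' p a / p

/-- `a ∈ ℤ_p ∖ ℤ_{≤0}`, i.e. `a` is not a nonpositive rational integer. -/
def NotNonposInt (p : ℕ) [Fact p.Prime] (a : ℤ_[p]) : Prop := ∀ n : ℕ, a + (n : ℤ_[p]) ≠ 0

/-- `a′` is the Dwork prime of `a`, i.e. `p·a′ = a + l`. -/
def IsDworkPrime (p : ℕ) [Fact p.Prime] (a a' : ℤ_[p]) : Prop :=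
  (p : ℤ_[p]) * a' = a + (dl p a : ℤ_[p])

/-- `A k = ((a)_k / k!)^s ∈ ℤ_p`, characterized by `k!^s · A k = ((a)_k)^s`. -/
def IsHGCoeff (p : ℕ) [Fact p.Prime] (s : ℕ) (a : ℤ_[p]) (A : ℕ → ℤ_[p]) : Prop :=
  ∀ k : ℕ, (k.factorial : ℤ_[p]) ^ s * A k = ((ascPochhammer ℤ_[p] k).eval a) ^ s

/-- `f = (α ↦ c^α)` for `c ∈ 1 + pW`: `c^α` is uniquely characterized by
`c^α ≡ c^{α_n} mod p^n W` for any natural approximation `α_n` of `α` mod `p^n`. -/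
def IsCpow (p : ℕ) [Fact p.Prime] (c : Wp p) (f : ℤ_[p] → Wp p) : Prop :=
  ∀ (α : ℤ_[p]) (n : ℕ), f α - c ^ (α.appr n) ∈ Ideal.span {(p : Wp p) ^ n}

/-- The coefficients `B_k` of `Ĝ^{(σ)}_{a,…,a}(t)`, as elements of `K = Frac W`:
`B_k = (k+a)⁻¹ (A_k − (−1)^{se} A^{(1)}_{(k−l)/p} c^{(k−l)/p + a′})`. -/
noncomputable def BhatK (p : ℕ) [Fact p.Prime] (s : ℕ) (a a' : ℤ_[p]) (A A1 : ℕ → ℤ_[p])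
    (cpw : ℤ_[p] → Wp p) (k : ℕ) : Kp p :=
  ((k : Kp p) + iotaK p (iota p a))⁻¹ *
    (iotaK p (iota p (A k)) -
      (if dl p a ≤ k ∧ p ∣ (k - dl p a) then
        (-1 : Kp p) ^ (s * de p a) * iotaK p (iota p (A1 ((k - dl p a) / p))) *
          iotaK p (cpw ((((k - dl p a) / p : ℕ) : ℤ_[p]) + a'))
      else 0))

/-- `B : ℕ → W` is the coefficient function of `Ĝ^{(σ)}_{a,…,a}(t)`, characterized in `W` by
`(k+a)·B_k = A_k − (−1)^{se} A^{(1)}_{(k−l)/p} c^{(k−l)/p + a′}`. -/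
def IsBhat (p : ℕ) [Fact p.Prime] (s : ℕ) (a a' : ℤ_[p]) (A A1 : ℕ → ℤ_[p])
    (cpw : ℤ_[p] → Wp p) (B : ℕ → Wp p) : Prop :=
  ∀ k : ℕ, ((k : Wp p) + iota p a) * B k =
    iota p (A k) -
      (if dl p a ≤ k ∧ p ∣ (k - dl p a) then
        (-1 : Wp p) ^ (s * de p a) * iota p (A1 ((k - dl p a) / p)) *
          cpw ((((k - dl p a) / p : ℕ) : ℤ_[p]) + a')
      else 0)

/-- A function `ℕ → K` is Lipschitz: it takes values in `W` and
`p^m ∣ (n − n′)` implies `f n − f n′ ∈ p^m W`. -/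
def LipschitzSeq (p : ℕ) [Fact p.Prime] (f : ℕ → Kp p) : Prop :=
  (∀ n : ℕ, f n ∈ (iotaK p).range) ∧
    ∀ n n' m : ℕ, ((p : ℤ) ^ m ∣ (n : ℤ) - (n' : ℤ)) →
      ∃ w : Wp p, f n - f n' = (p : Kp p) ^ m * iotaK p w

/-- `L` is the `p`-adic limit of the sequence `s` in `W`. -/
def WLim (p : ℕ) [Fact p.Prime] (s : ℕ → Wp p) (L : Wp p) : Prop :=
  ∀ m : ℕ, ∃ M : ℕ, ∀ n ≥ M, L - s n ∈ Ideal.span {(p : Wp p) ^ m}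

/-- `{α}_k := Π_{1 ≤ i ≤ k, p ∤ (α+i−1)} (α+i−1)`. -/
noncomputable def curly (p : ℕ) [Fact p.Prime] (α : ℤ_[p]) (k : ℕ) : ℤ_[p] :=
  ∏ j ∈ Finset.range k, if (p : ℤ_[p]) ∣ (α + (j : ℤ_[p])) then 1 else (α + (j : ℤ_[p]))

/-- `W/p^n W`. -/
abbrev Qn (p : ℕ) [Fact p.Prime] (n : ℕ) := Wp p ⧸ Ideal.span {(p : Wp p) ^ n}

/-- Laurent polynomials over `W/p^n`, obtained from polynomials over `W`. -/
noncomputable def laurentOfPolyW (p : ℕ) [Fact p.Prime] (n : ℕ) :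
    Polynomial (Wp p) →+* LaurentPolynomial (Qn p n) :=
  (Polynomial.toLaurent).comp
    (Polynomial.mapRingHom (Ideal.Quotient.mk (Ideal.span {(p : Wp p) ^ n})))

/-- `R_n := (W/p^n)[t,t⁻¹, h(t)⁻¹]`, the localization of the Laurent polynomial ring
over `W/p^n` away from (the image of) `h`. -/
abbrev Rn (p : ℕ) [Fact p.Prime] (h : Polynomial (Wp p)) (n : ℕ) :=
  Localization.Away (laurentOfPolyW p n h)

/-- The canonical map from Laurent polynomials over `W/p^n` to `R_n`. -/
noncomputable def mkRn (p : ℕ) [Fact p.Prime] (h : Polynomial (Wp p)) (n : ℕ) :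
    LaurentPolynomial (Qn p n) →+* Rn p h n := algebraMap _ _

/-- The canonical map from polynomials over `W` to `R_n`. -/
noncomputable def toRn (p : ℕ) [Fact p.Prime] (h : Polynomial (Wp p)) (n : ℕ) :
    Polynomial (Wp p) →+* Rn p h n := (mkRn p h n).comp (laurentOfPolyW p n)

/-!
At the indices `k ≥ l` with `k ≡ l mod p` put `β_k := (k - l)/p + a′`, so that `k + a = p β_k`;
at all other indices `B_k = B°_k`. Then
`B_k/A_k = c^{β_k} · B°_k/A_k + (1 - c^{β_k})/(p β_k)`,
and since `p^m ∣ n - n'` gives `p^{m-1} ∣ β_n - β_{n'}`, it suffices that `c^β` and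
`(1 - c^β)/(pβ)` change by `p^{r+1}W` when `β` changes by `p^r ℤ_p`. For `c^β` this follows from
`c ≡ 1 mod p`. For the quotient, approximate `β, β'` by natural numbers `N, N'` and expand
`c^N = (1 + x)^N` binomially: the `j`-th term of `N'(c^N - 1) - N(c^{N'} - 1)` is
`x^j (N' C(N,j) - N C(N',j))`, and `j!` times the bracket is `N N'` times a difference of falling
factorials at `N - 1` and `N' - 1`, hence divisible by `N N' (N - N')`. As `x ∈ qW`,
`v_p(x^j) ≥ v_p(j!) + 2` for `j ≥ 2`; this is where `q = 4` is needed when `p = 2`.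
-/

lemma dvd_qq (p : ℕ) : p ∣ qq p := by
  unfold qq
  split_ifs with h2
  exacts [h2 ▸ ⟨2, rfl⟩, dvd_rfl]

open Nat in
lemma pow_padicValNat_factorial_add_two_dvd_qq_pow {p : ℕ} [Fact p.Prime] {j : ℕ} (hj : 2 ≤ j) :
    p ^ (padicValNat p j ! + 2) ∣ qq p ^ j := by
  have hlt := sub_one_mul_padicValNat_factorial_lt_of_ne_zero p (n := j) (by omega)
  unfold qq
  split_ifs with h2
  · subst h2
    rw [show (4 : ℕ) = 2 ^ 2 by norm_num, ← pow_mul]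
    exact pow_dvd_pow 2 (by omega)
  · have hp3 : 3 ≤ p := lt_of_le_of_ne (Fact.out : p.Prime).two_le (Ne.symm h2)
    have : 2 * padicValNat p j ! ≤ (p - 1) * padicValNat p j ! :=
      Nat.mul_le_mul_right _ (by omega)
    exact pow_dvd_pow p (by omega)

lemma pow_sub_padicValNat_dvd_of_pow_dvd_mul {p : ℕ} [Fact p.Prime] {m a : ℕ} {T : ℤ}
    (hm : m ≠ 0) (h : (p : ℤ) ^ a ∣ m * T) : (p : ℤ) ^ (a - padicValNat p m) ∣ T := by
  rcases eq_or_ne T 0 with rfl | hT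
  · exact dvd_zero _
  rw [padicValInt_dvd_iff] at h ⊢
  rcases h with h | h
  · exact absurd h (mul_ne_zero (by exact_mod_cast hm) hT)
  rw [padicValInt.mul (by exact_mod_cast hm) hT, padicValInt.of_nat] at h
  exact Or.inr (by omega)

section PowSubOne

variable {R : Type*} [CommRing R] {p : ℕ} {c : R}

lemma pow_succ_dvd_pow_sub_one (hc : (p : R) ∣ c - 1) {N d : ℕ} (hN : p ^ d ∣ N) :
    (p : R) ^ (d + 1) ∣ c ^ N - 1 := by
  obtain ⟨m, rfl⟩ := hN
  have h := dvd_sub_pow_of_dvd_sub (b := 1) hc d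
  rw [one_pow] at h
  rw [pow_mul]
  simpa using h.trans (sub_dvd_pow_sub_pow (c ^ p ^ d) 1 m)

lemma pow_succ_dvd_pow_sub_pow (hc : (p : R) ∣ c - 1) {N N' r : ℕ}
    (h : (p : ℤ) ^ r ∣ (N : ℤ) - N') : (p : R) ^ (r + 1) ∣ c ^ N - c ^ N' := by
  wlog hle : N' ≤ N generalizing N N'
  · rw [← neg_sub]
    exact (this (by rw [← neg_sub]; exact h.neg_right) (by omega)).neg_right
  have hsub : p ^ r ∣ N - N' := by
    exact_mod_cast (show ((p ^ r : ℕ) : ℤ) ∣ ((N - N' : ℕ) : ℤ) by push_cast [hle]; exact h)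
  rw [show c ^ N - c ^ N' = c ^ N' * (c ^ (N - N') - 1) by
    rw [mul_sub, mul_one, ← pow_add, Nat.add_sub_cancel' hle]]
  exact (pow_succ_dvd_pow_sub_one hc hsub).mul_left _

end PowSubOne

open Nat Polynomial in
lemma pow_dvd_factorial_mul_cross_choose (p : ℕ) {N N' d d' r : ℕ} (i : ℕ)
    (hd : p ^ d ∣ N) (hd' : p ^ d' ∣ N') (hr : (p : ℤ) ^ r ∣ (N : ℤ) - N') :
    (p : ℤ) ^ (d + d' + r) ∣
      ((i + 1) ! : ℤ) * (N' * (N.choose (i + 1) : ℤ) - N * (N'.choose (i + 1) : ℤ)) := by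
  set P := descPochhammer ℤ i
  have hchoose : ∀ M : ℕ, ((i + 1) ! : ℤ) * (M.choose (i + 1) : ℤ) = M * P.eval ((M : ℤ) - 1) := by
    intro M
    rw [← Nat.cast_mul, ← Nat.descFactorial_eq_factorial_mul_choose,
      ← descPochhammer_eval_eq_descFactorial, descPochhammer_succ_left]
    simp [P]
  have hdiff := sub_dvd_eval_sub ((N : ℤ) - 1) ((N' : ℤ) - 1) P
  rw [sub_sub_sub_cancel_right] at hdiff
  have hid : ((i + 1) ! : ℤ) * (N' * (N.choose (i + 1) : ℤ) - N * (N'.choose (i + 1) : ℤ)) =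
      N * N' * (P.eval ((N : ℤ) - 1) - P.eval ((N' : ℤ) - 1)) := by
    linear_combination (N' : ℤ) * hchoose N - (N : ℤ) * hchoose N'
  rw [hid, pow_add, pow_add]
  exact mul_dvd_mul (mul_dvd_mul (by exact_mod_cast hd) (by exact_mod_cast hd')) (hr.trans hdiff)

section OneAddPow

variable {R : Type*} [CommRing R]

lemma one_add_pow_sub_one_eq_sum (x : R) {M L : ℕ} (hM : M ≤ L) :
    (1 + x) ^ M - 1 = ∑ i ∈ Finset.range L, x ^ (i + 1) * (M.choose (i + 1) : R) := by
  rw [add_comm 1 x, add_pow, Finset.sum_range_succ']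
  simp only [one_pow, mul_one, pow_zero, Nat.choose_zero_right, Nat.cast_one, add_sub_cancel_right]
  refine Finset.sum_subset (Finset.range_subset_range.mpr hM) fun i _ hi => ?_
  rw [Nat.choose_eq_zero_of_lt (by simp at hi; omega), Nat.cast_zero, mul_zero]

lemma mul_one_add_pow_sub_one_sub_eq_sum (x : R) (N N' : ℕ) :
    (N' : R) * ((1 + x) ^ N - 1) - N * ((1 + x) ^ N' - 1) =
      ∑ i ∈ Finset.range (N + N'), x ^ (i + 1) *
        ((N' * (N.choose (i + 1) : ℤ) - N * (N'.choose (i + 1) : ℤ) : ℤ) : R) := by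
  rw [one_add_pow_sub_one_eq_sum x (Nat.le_add_right N N'),
    one_add_pow_sub_one_eq_sum x (Nat.le_add_left N' N), Finset.mul_sum, Finset.mul_sum,
    ← Finset.sum_sub_distrib]
  refine Finset.sum_congr rfl fun i _ => ?_
  push_cast
  ring

end OneAddPow

open Nat in
lemma pow_dvd_mul_pow_sub_one_sub_mul_pow_sub_one {R : Type*} [CommRing R] {p : ℕ} [Fact p.Prime]
    {x : R} (hx : ∀ j, 2 ≤ j → (p : R) ^ (padicValNat p j ! + 2) ∣ x ^ j)
    {N N' d d' r : ℕ} (hd : p ^ d ∣ N) (hd' : p ^ d' ∣ N') (hr : (p : ℤ) ^ r ∣ (N : ℤ) - N') :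
    (p : R) ^ (d + d' + r + 2) ∣ (N' : R) * ((1 + x) ^ N - 1) - N * ((1 + x) ^ N' - 1) := by
  rw [mul_one_add_pow_sub_one_sub_eq_sum]
  refine Finset.dvd_sum fun i _ => ?_
  rcases Nat.eq_zero_or_pos i with rfl | hi
  · simp [mul_comm]
  have hT := map_dvd (Int.castRingHom R) <| pow_sub_padicValNat_dvd_of_pow_dvd_mul
    (factorial_ne_zero _) (pow_dvd_factorial_mul_cross_choose p i hd hd' hr)
  rw [map_pow, map_natCast] at hT
  calc (p : R) ^ (d + d' + r + 2)
      ∣ (p : R) ^ (padicValNat p (i + 1) ! + 2) *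
          (p : R) ^ (d + d' + r - padicValNat p (i + 1) !) := by
        rw [← pow_add]
        exact pow_dvd_pow _ (by omega)
    _ ∣ _ := mul_dvd_mul (hx _ (by omega)) hT

section Approximation

variable {p : ℕ} [Fact p.Prime]

lemma pow_dvd_sub_appr (β : ℤ_[p]) (n : ℕ) : (p : ℤ_[p]) ^ n ∣ β - β.appr n :=
  Ideal.mem_span_singleton.mp (PadicInt.appr_spec n β)

lemma pow_dvd_appr {β : ℤ_[p]} {d n : ℕ} (h : (p : ℤ_[p]) ^ d ∣ β) (hdn : d ≤ n) :
    p ^ d ∣ β.appr n := by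
  have h' : (p : ℤ_[p]) ^ d ∣ ((β.appr n : ℤ) : ℤ_[p]) := by
    simpa using h.sub ((pow_dvd_pow _ hdn).trans (pow_dvd_sub_appr β n))
  exact_mod_cast (PadicInt.pow_p_dvd_int_iff d _).mp h'

lemma pow_dvd_appr_sub_appr {β β' : ℤ_[p]} {r n : ℕ} (h : (p : ℤ_[p]) ^ r ∣ β - β')
    (hrn : r ≤ n) : (p : ℤ) ^ r ∣ (β.appr n : ℤ) - β'.appr n := by
  have h' : (p : ℤ_[p]) ^ r ∣ (((β.appr n : ℤ) - β'.appr n : ℤ) : ℤ_[p]) := by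
    have hβ := (pow_dvd_pow _ hrn).trans (pow_dvd_sub_appr β n)
    have hβ' := (pow_dvd_pow _ hrn).trans (pow_dvd_sub_appr β' n)
    convert (h.sub hβ).add hβ' using 1
    push_cast
    ring
  exact (PadicInt.pow_p_dvd_int_iff r _).mp h'

end Approximation

section Iota

variable {p : ℕ} [Fact p.Prime]

lemma iota_injective : Function.Injective (iota p) :=
  (WittVector.map_injective _ (algebraMap (ZMod p) (Fbar p)).injective).comp
    (WittVector.equiv p).symm.injective

lemma associated_pow_valuation_iota {β : ℤ_[p]} (hβ : β ≠ 0) :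
    Associated ((p : Wp p) ^ β.valuation) (iota p β) := by
  refine ⟨Units.map (iota p).toMonoidHom (PadicInt.unitCoeff hβ), ?_⟩
  conv_rhs => rw [PadicInt.unitCoeff_spec hβ]
  simp [mul_comm]

lemma iotaK_injective : Function.Injective (iotaK p) :=
  IsFractionRing.injective _ _

lemma iotaK_iota_ne_zero {β : ℤ_[p]} (hβ : β ≠ 0) : iotaK p (iota p β) ≠ 0 :=
  (map_ne_zero_iff _ iotaK_injective).mpr ((map_ne_zero_iff _ iota_injective).mpr hβ)

lemma natCast_ne_zero_Kp : (p : Kp p) ≠ 0 := by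
  rw [← map_natCast (iotaK p)]
  exact (map_ne_zero_iff _ iotaK_injective).mpr (WittVector.irreducible p).ne_zero

end Iota

namespace IsCpow

variable {p : ℕ} [Fact p.Prime] {c : Wp p} {cpw : ℤ_[p] → Wp p}

lemma pow_dvd_sub_pow_appr (hcpw : IsCpow p c cpw) (β : ℤ_[p]) (n : ℕ) :
    (p : Wp p) ^ n ∣ cpw β - c ^ β.appr n :=
  Ideal.mem_span_singleton.mp (hcpw β n)

lemma pow_succ_dvd_sub_one (hcpw : IsCpow p c cpw) (hc : (p : Wp p) ∣ c - 1) {β : ℤ_[p]}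
    {d : ℕ} (hβ : (p : ℤ_[p]) ^ d ∣ β) : (p : Wp p) ^ (d + 1) ∣ cpw β - 1 := by
  rw [← sub_add_sub_cancel _ (c ^ β.appr (d + 1))]
  exact (hcpw.pow_dvd_sub_pow_appr β _).add
    (pow_succ_dvd_pow_sub_one hc (pow_dvd_appr hβ (Nat.le_succ d)))

lemma mul_iota_dvd_sub_one (hcpw : IsCpow p c cpw) (hc : (p : Wp p) ∣ c - 1) {β : ℤ_[p]}
    (hβ : β ≠ 0) : (p : Wp p) * iota p β ∣ cpw β - 1 := by
  have hassoc := (associated_pow_valuation_iota hβ).mul_left (p : Wp p)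
  rw [← pow_succ'] at hassoc
  exact hassoc.dvd_iff_dvd_left.mp
    (hcpw.pow_succ_dvd_sub_one hc (Dvd.intro_left _ (PadicInt.unitCoeff_spec hβ).symm))

lemma pow_succ_dvd_sub (hcpw : IsCpow p c cpw) (hc : (p : Wp p) ∣ c - 1) {β β' : ℤ_[p]}
    {r : ℕ} (hr : (p : ℤ_[p]) ^ r ∣ β - β') : (p : Wp p) ^ (r + 1) ∣ cpw β - cpw β' := by
  have hsplit : cpw β - cpw β' = (cpw β - c ^ β.appr (r + 1)) - (cpw β' - c ^ β'.appr (r + 1)) +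
      (c ^ β.appr (r + 1) - c ^ β'.appr (r + 1)) := by ring
  rw [hsplit]
  exact ((hcpw.pow_dvd_sub_pow_appr β _).sub (hcpw.pow_dvd_sub_pow_appr β' _)).add
    (pow_succ_dvd_pow_sub_pow hc (pow_dvd_appr_sub_appr hr (Nat.le_succ r)))

open Nat in
lemma pow_mul_iota_mul_iota_dvd (hcpw : IsCpow p c cpw) {x : Wp p} (hcx : c = 1 + x)
    (hx : ∀ j, 2 ≤ j → (p : Wp p) ^ (padicValNat p j ! + 2) ∣ x ^ j)
    {β β' : ℤ_[p]} (hβ : β ≠ 0) (hβ' : β' ≠ 0) {r : ℕ} (hr : (p : ℤ_[p]) ^ r ∣ β - β') :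
    (p : Wp p) ^ (r + 2) * iota p β * iota p β' ∣
      iota p β' * (cpw β - 1) - iota p β * (cpw β' - 1) := by
  set d := β.valuation
  set d' := β'.valuation
  set n := d + d' + r + 2
  set N := β.appr n
  set N' := β'.appr n
  have hassoc : Associated ((p : Wp p) ^ n) ((p : Wp p) ^ (r + 2) * iota p β * iota p β') := by
    rw [show n = (r + 2) + d + d' by omega, pow_add, pow_add]
    exact ((Associated.refl _).mul_mul (associated_pow_valuation_iota hβ)).mul_mul
      (associated_pow_valuation_iota hβ')
  have happrox : ∀ γ : ℤ_[p], (p : Wp p) ^ n ∣ iota p γ - (γ.appr n : Wp p) := fun γ => by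
    simpa using map_dvd (iota p) (pow_dvd_sub_appr γ n)
  have hnat : (p : Wp p) ^ n ∣ (N' : Wp p) * (c ^ N - 1) - N * (c ^ N' - 1) := by
    rw [hcx]
    exact pow_dvd_mul_pow_sub_one_sub_mul_pow_sub_one hx
      (pow_dvd_appr (Dvd.intro_left _ (PadicInt.unitCoeff_spec hβ).symm) (by omega))
      (pow_dvd_appr (Dvd.intro_left _ (PadicInt.unitCoeff_spec hβ').symm) (by omega))
      (pow_dvd_appr_sub_appr hr (by omega))
  have hsplit : iota p β' * (cpw β - 1) - iota p β * (cpw β' - 1) =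
      ((N' : Wp p) * (c ^ N - 1) - N * (c ^ N' - 1)) +
        (iota p β' * (cpw β - c ^ N) - iota p β * (cpw β' - c ^ N')) +
        ((iota p β' - N') * (c ^ N - 1) - (iota p β - N) * (c ^ N' - 1)) := by ring
  refine hassoc.dvd_iff_dvd_left.mp ?_
  rw [hsplit]
  exact (hnat.add (((hcpw.pow_dvd_sub_pow_appr β n).mul_left _).sub
    ((hcpw.pow_dvd_sub_pow_appr β' n).mul_left _))).add
    (((happrox β').mul_right _).sub ((happrox β).mul_right _))

end IsCpow

section Lipschitz

variable {p : ℕ} [Fact p.Prime]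

lemma LipschitzSeq.add {f g : ℕ → Kp p} (hf : LipschitzSeq p f) (hg : LipschitzSeq p g) :
    LipschitzSeq p (f + g) := by
  refine ⟨fun n => add_mem (hf.1 n) (hg.1 n), fun n n' m hm => ?_⟩
  obtain ⟨v, hv⟩ := hf.2 n n' m hm
  obtain ⟨w, hw⟩ := hg.2 n n' m hm
  exact ⟨v + w, by simp only [Pi.add_apply, map_add]; linear_combination hv + hw⟩

lemma LipschitzSeq.mul {f g : ℕ → Kp p} (hf : LipschitzSeq p f) (hg : LipschitzSeq p g) :
    LipschitzSeq p (f * g) := by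
  refine ⟨fun n => mul_mem (hf.1 n) (hg.1 n), fun n n' m hm => ?_⟩
  obtain ⟨v, hv⟩ := hf.2 n n' m hm
  obtain ⟨w, hw⟩ := hg.2 n n' m hm
  obtain ⟨x, hx⟩ := hf.1 n
  obtain ⟨y, hy⟩ := hg.1 n'
  refine ⟨x * w + v * y, ?_⟩
  simp only [Pi.mul_apply, map_add, map_mul, hx, hy]
  linear_combination f n * hw + g n' * hv

end Lipschitz

section DworkIndex

variable {p : ℕ} [Fact p.Prime] {a : ℤ_[p]}

-- The indices `k ≥ l` with `k ≡ l mod p`, where `B_k` involves `A^{(1)}_{(k-l)/p}`.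
def IsDworkIndex (p : ℕ) [Fact p.Prime] (a : ℤ_[p]) (k : ℕ) : Prop :=
  dl p a ≤ k ∧ p ∣ k - dl p a

-- The exponent of `c` in `B_k`.
noncomputable def dworkArg (p : ℕ) [Fact p.Prime] (a a' : ℤ_[p]) (k : ℕ) : ℤ_[p] :=
  (((k - dl p a) / p : ℕ) : ℤ_[p]) + a'

lemma dl_lt : dl p a < p := by
  simpa [dl] using PadicInt.appr_lt (-a) 1

lemma isDworkIndex_iff {k : ℕ} : IsDworkIndex p a k ↔ (p : ℤ) ∣ (k : ℤ) - dl p a := by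
  constructor
  · rintro ⟨hle, hdvd⟩
    have h := Int.natCast_dvd_natCast.mpr hdvd
    push_cast [hle] at h
    exact h
  · intro h
    have hle : dl p a ≤ k := by
      by_contra hlt
      have := Int.eq_zero_of_abs_lt_dvd h (by have := dl_lt (a := a); rw [abs_lt]; omega)
      omega
    refine ⟨hle, Int.natCast_dvd_natCast.mp ?_⟩
    push_cast [hle]
    exact h

lemma isDworkIndex_iff_of_dvd_sub {n n' : ℕ} (h : (p : ℤ) ∣ (n : ℤ) - n') :
    IsDworkIndex p a n ↔ IsDworkIndex p a n' := by
  rw [isDworkIndex_iff, isDworkIndex_iff]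
  exact ⟨fun h' => by simpa using h'.sub h, fun h' => by simpa using h'.add h⟩

lemma mul_dworkArg {a' : ℤ_[p]} (ha' : IsDworkPrime p a a') {k : ℕ} (hk : IsDworkIndex p a k) :
    (p : ℤ_[p]) * dworkArg p a a' k = k + a := by
  obtain ⟨hle, t, ht⟩ := hk
  rw [dworkArg, ht, Nat.mul_div_cancel_left _ (Fact.out : p.Prime).pos, mul_add, ha',
    show (k : ℤ_[p]) = dl p a + p * t by rw [← Nat.cast_mul, ← ht]; push_cast [hle]; ring]
  ring

lemma pow_dvd_dworkArg_sub_dworkArg {a' : ℤ_[p]} {n n' m : ℕ} (hn : IsDworkIndex p a n)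
    (hn' : IsDworkIndex p a n') (h : (p : ℤ) ^ (m + 1) ∣ (n : ℤ) - n') :
    (p : ℤ_[p]) ^ m ∣ dworkArg p a a' n - dworkArg p a a' n' := by
  obtain ⟨hle, t, ht⟩ := hn
  obtain ⟨hle', t', ht'⟩ := hn'
  rw [dworkArg, dworkArg, ht, ht', Nat.mul_div_cancel_left _ (Fact.out : p.Prime).pos,
    Nat.mul_div_cancel_left _ (Fact.out : p.Prime).pos, add_sub_add_right_eq_sub]
  zify [hle, hle'] at ht ht'
  have hsub : (n : ℤ) - n' = p * ((t : ℤ) - t') := by linear_combination ht - ht'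
  rw [hsub, pow_succ', mul_dvd_mul_iff_left (by exact_mod_cast (Fact.out : p.Prime).ne_zero)] at h
  simpa using (PadicInt.pow_p_dvd_int_iff m _).mpr h

end DworkIndex

lemma lipschitzSeq_ite_dworkArg {p : ℕ} [Fact p.Prime] {a a' : ℤ_[p]} {F : ℤ_[p] → Kp p}
    {x₀ : Kp p} (hx₀ : x₀ ∈ (iotaK p).range)
    (hF : ∀ k, IsDworkIndex p a k → F (dworkArg p a a' k) ∈ (iotaK p).range)
    (hFsub : ∀ k k' r, IsDworkIndex p a k → IsDworkIndex p a k' →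
      (p : ℤ_[p]) ^ r ∣ dworkArg p a a' k - dworkArg p a a' k' →
        ∃ w, F (dworkArg p a a' k) - F (dworkArg p a a' k') = (p : Kp p) ^ (r + 1) * iotaK p w) :
    LipschitzSeq p (fun k => if IsDworkIndex p a k then F (dworkArg p a a' k) else x₀) := by
  have hmem : ∀ k, (if IsDworkIndex p a k then F (dworkArg p a a' k) else x₀) ∈ (iotaK p).range :=
    fun k => by split_ifs with hk; exacts [hF k hk, hx₀]
  refine ⟨hmem, fun n n' m hm => ?_⟩
  cases m with
  | zero =>
    obtain ⟨w, hw⟩ := sub_mem (hmem n) (hmem n')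
    exact ⟨w, by rw [pow_zero, one_mul, hw]⟩
  | succ m =>
    have hiff := isDworkIndex_iff_of_dvd_sub (a := a) ((dvd_pow_self _ m.succ_ne_zero).trans hm)
    by_cases hn : IsDworkIndex p a n
    · simp only [if_pos hn, if_pos (hiff.mp hn)]
      exact hFsub n n' m hn (hiff.mp hn) (pow_dvd_dworkArg_sub_dworkArg hn (hiff.mp hn) hm)
    · simp only [if_neg hn, if_neg (mt hiff.mpr hn), sub_self]
      exact ⟨0, by simp⟩

section CpowQuotient

variable {p : ℕ} [Fact p.Prime] {c : Wp p} {cpw : ℤ_[p] → Wp p}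

noncomputable def cpowQuotient (cpw : ℤ_[p] → Wp p) (β : ℤ_[p]) : Kp p :=
  iotaK p (1 - cpw β) / ((p : Kp p) * iotaK p (iota p β))

lemma cpowQuotient_mem_range (hcpw : IsCpow p c cpw) (hc : (p : Wp p) ∣ c - 1) {β : ℤ_[p]}
    (hβ : β ≠ 0) : cpowQuotient cpw β ∈ (iotaK p).range := by
  obtain ⟨w, hw⟩ := hcpw.mul_iota_dvd_sub_one hc hβ
  refine ⟨-w, ?_⟩
  rw [cpowQuotient, eq_div_iff (mul_ne_zero natCast_ne_zero_Kp (iotaK_iota_ne_zero hβ)),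
    ← neg_sub, hw]
  simp only [map_neg, map_mul, map_natCast]
  ring

lemma cpowQuotient_sub (hcpw : IsCpow p c cpw) {x : Wp p} (hcx : c = 1 + x)
    (hx : ∀ j, 2 ≤ j → (p : Wp p) ^ (padicValNat p j.factorial + 2) ∣ x ^ j)
    {β β' : ℤ_[p]} (hβ : β ≠ 0) (hβ' : β' ≠ 0) {r : ℕ} (hr : (p : ℤ_[p]) ^ r ∣ β - β') :
    ∃ w, cpowQuotient cpw β - cpowQuotient cpw β' = (p : Kp p) ^ (r + 1) * iotaK p w := by
  obtain ⟨w, hw⟩ := hcpw.pow_mul_iota_mul_iota_dvd hcx hx hβ hβ' hr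
  refine ⟨-w, ?_⟩
  have hK := congrArg (iotaK p) hw
  simp only [map_sub, map_mul, map_pow, map_natCast, map_one] at hK
  have hB := mul_ne_zero natCast_ne_zero_Kp (iotaK_iota_ne_zero hβ)
  have hB' := mul_ne_zero natCast_ne_zero_Kp (iotaK_iota_ne_zero hβ')
  rw [cpowQuotient, cpowQuotient, div_sub_div _ _ hB hB', div_eq_iff (mul_ne_zero hB hB')]
  simp only [map_sub, map_one, map_neg]
  linear_combination (-(p : Kp p)) * hK

end CpowQuotient

lemma IsHGCoeff.ne_zero {p : ℕ} [Fact p.Prime] {s : ℕ} {a : ℤ_[p]} {A : ℕ → ℤ_[p]}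
    (hA : IsHGCoeff p s a A) (ha : NotNonposInt p a) (k : ℕ) : A k ≠ 0 := by
  have hpoch : (ascPochhammer ℤ_[p] k).eval a ≠ 0 := by
    induction k with
    | zero => simp
    | succ n ih => rw [ascPochhammer_succ_eval]; exact mul_ne_zero ih (ha n)
  intro h0
  have := hA k
  rw [h0, mul_zero] at this
  exact pow_ne_zero s hpoch this.symm

lemma BhatK_div_eq {p : ℕ} [Fact p.Prime] {s : ℕ} {a a' : ℤ_[p]} (ha' : IsDworkPrime p a a')
    {A A1 : ℕ → ℤ_[p]} (cpw : ℤ_[p] → Wp p) {k : ℕ} (hA : A k ≠ 0) :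
    BhatK p s a a' A A1 cpw k / iotaK p (iota p (A k)) =
      (if IsDworkIndex p a k then iotaK p (cpw (dworkArg p a a' k)) else 1) *
          (BhatK p s a a' A A1 (fun _ => 1) k / iotaK p (iota p (A k))) +
        if IsDworkIndex p a k then cpowQuotient cpw (dworkArg p a a' k) else 0 := by
  have hAK := iotaK_iota_ne_zero hA
  by_cases hk : IsDworkIndex p a k
  · have hκ : (k : Kp p) + iotaK p (iota p a) = p * iotaK p (iota p (dworkArg p a a' k)) := by
      rw [← map_natCast (iotaK p), ← map_natCast (iota p), ← map_add, ← map_add,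
        ← mul_dworkArg ha' hk]
      simp
    have hk' : dl p a ≤ k ∧ p ∣ k - dl p a := hk
    rw [BhatK, BhatK, if_pos hk', if_pos hk', if_pos hk, if_pos hk, cpowQuotient, hκ, map_sub,
      map_one, show (((k - dl p a) / p : ℕ) : ℤ_[p]) + a' = dworkArg p a a' k from rfl]
    field_simp
    ring
  · have hk' : ¬(dl p a ≤ k ∧ p ∣ k - dl p a) := hk
    rw [BhatK, BhatK, if_neg hk', if_neg hk', if_neg hk, if_neg hk, one_mul, add_zero]

theorem statement7_general (p : ℕ) [Fact p.Prime] (s : ℕ)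
    (a a' : ℤ_[p]) (ha : NotNonposInt p a) (ha' : IsDworkPrime p a a')
    (A A1 : ℕ → ℤ_[p]) (hA : IsHGCoeff p s a A)
    (hcirc : LipschitzSeq p
      (fun k => BhatK p s a a' A A1 (fun _ => 1) k / iotaK p (iota p (A k)))) :
    ∀ (u c : Wp p), c = 1 + (qq p : Wp p) * u →
      ∀ cpw : ℤ_[p] → Wp p, IsCpow p c cpw →
        LipschitzSeq p
          (fun k => BhatK p s a a' A A1 cpw k / iotaK p (iota p (A k))) := by
  intro u c hc cpw hcpw
  have hpq : (p : Wp p) ∣ c - 1 := by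
    rw [hc, add_sub_cancel_left]
    exact (Nat.cast_dvd_cast (dvd_qq p)).mul_right u
  have hx : ∀ j, 2 ≤ j →
      (p : Wp p) ^ (padicValNat p j.factorial + 2) ∣ ((qq p : Wp p) * u) ^ j := fun j hj => by
    rw [mul_pow]
    exact_mod_cast (Nat.cast_dvd_cast (α := Wp p)
      (pow_padicValNat_factorial_add_two_dvd_qq_pow hj)).mul_right _
  have hβ : ∀ k, IsDworkIndex p a k → dworkArg p a a' k ≠ 0 := fun k hk h0 => by
    have := mul_dworkArg ha' hk
    rw [h0, mul_zero, add_comm] at this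
    exact ha k this.symm
  have hγ : LipschitzSeq p
      (fun k => if IsDworkIndex p a k then iotaK p (cpw (dworkArg p a a' k)) else 1) :=
    lipschitzSeq_ite_dworkArg (F := fun β => iotaK p (cpw β)) (one_mem _) (fun k _ => ⟨_, rfl⟩)
      fun k k' r _ _ hr => by
        obtain ⟨w, hw⟩ := hcpw.pow_succ_dvd_sub hpq hr
        exact ⟨w, by rw [← map_sub, hw, map_mul, map_pow, map_natCast]⟩
  have ht : LipschitzSeq p
      (fun k => if IsDworkIndex p a k then cpowQuotient cpw (dworkArg p a a' k) else 0) :=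
    lipschitzSeq_ite_dworkArg (zero_mem _)
      (fun k hk => cpowQuotient_mem_range hcpw hpq (hβ k hk))
      fun k k' r hk hk' hr => cpowQuotient_sub hcpw hc hx (hβ k hk) (hβ k' hk') hr
  convert (hγ.mul hcirc).add ht using 1
  funext k
  exact BhatK_div_eq ha' cpw (hA.ne_zero ha k)

/-- if `k ↦ B°_k/A_k` (the case `c = 1`) is Lipschitz, then for every
`c ∈ 1 + qW` the function `k ↦ B_k/A_k` is Lipschitz. -/
theorem statement7 (p : ℕ) [Fact p.Prime] (s : ℕ) (hs : 1 ≤ s)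
    (a a' : ℤ_[p]) (ha : NotNonposInt p a) (ha' : IsDworkPrime p a a')
    (A A1 : ℕ → ℤ_[p]) (hA : IsHGCoeff p s a A) (hA1 : IsHGCoeff p s a' A1)
    (hcirc : LipschitzSeq p
      (fun k => BhatK p s a a' A A1 (fun _ => 1) k / iotaK p (iota p (A k)))) :
    ∀ (u c : Wp p), c = 1 + (qq p : Wp p) * u →
      ∀ cpw : ℤ_[p] → Wp p, IsCpow p c cpw →
        LipschitzSeq p
          (fun k => BhatK p s a a' A A1 cpw k / iotaK p (iota p (A k))) :=
  statement7_general p s a a' ha ha' A A1 hA hcirc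

end HGP
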